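/- Let A = (S, S₀, Act, Φ) be a system with S finite, Σ a set of action sequences with transition function Φ_Σ, P a policy, and μ a goal predicate on S. There exists an infinite policy trajectory s₀, σ₁, s₁, σ₂, s₂, … (with s₀ ∈ S₀, σ_{i+1} ∈ P(s_i), s_{i+1} ∈ Φ_Σ(s_i, σ_{i+1}) for all i ∈ ℕ) none of whose states satisfies μ if and only if there exists a finite policy trajectory s₀, σ₁, …, s_n with n ≤ |S| none of whose states satisfies μ and such that s_n = s_i for some i < n. In particular, searching for counterexample trajectories up to length |S| + 1 suffices to detect any infinite counterexample. -/
import Mathlib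


namespace Stmt10

/-- States reached from `s` by executing the action sequence `σ` under the
transition function `Φ` (the induced `Φ_Σ(s, σ)`). -/
def reach {S Act : Type*} (Φ : S → Act → Set S) : S → List Act → Set S
  | s, [] => {s}
  | s, a :: σ => ⋃ s' ∈ Φ s a, reach Φ s' σ

/-- `σ` is executable from `s`. -/
def executable {S Act : Type*} (Φ : S → Act → Set S) (s : S) (σ : List Act) : Prop :=
  (reach Φ s σ).Nonempty

/-- `Pol` is a policy for the plan set `Sig`: `Pol s ⊆ Σ(s)`, the plans of
`Sig` executable from `s`. -/
def isPolicy {S Act : Type*} (Φ : S → Act → Set S) (Sig : Set (List Act))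
    (Pol : S → Set (List Act)) : Prop :=
  ∀ s, Pol s ⊆ {σ ∈ Sig | executable Φ s σ}

/-- The generated abstract transition function
`Φ̂_P(ŝ, â) = { h_st(s') | ∃ s'' with h_st(s'') = ŝ, ∃ σ ∈ P(s'') with
h_act(σ) = â, s' ∈ Φ_Σ(s'', σ) }`. -/
def PhiHat {S Act Sh Ah : Type*} (Φ : S → Act → Set S)
    (Pol : S → Set (List Act)) (hst : S → Sh) (hact : List Act → Ah)
    (sh : Sh) (ah : Ah) : Set Sh :=
  {x | ∃ s'', hst s'' = sh ∧ ∃ σ ∈ Pol s'', hact σ = ah ∧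
        ∃ s' ∈ reach Φ s'' σ, x = hst s'}

/-- over a finite state space, there is an infinite policy
trajectory avoiding the goal `μ` iff there is a finite goal-avoiding policy
trajectory of length `n ≤ |S|` that ends in a repeated state (`s_n = s_i` for
some `i < n`); hence searching for counterexamples up to length `|S| + 1`
suffices. -/
theorem infinite_cex_iff_lasso_cex {S Act : Type*} [Fintype S]
    (S0 : Set S) (Φ : S → Act → Set S) (Sig : Set (List Act))
    (Pol : S → Set (List Act)) (hPol : isPolicy Φ Sig Pol)
    (μ : S → Prop) :
    (∃ (s : ℕ → S) (σ : ℕ → List Act),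
        s 0 ∈ S0 ∧
        (∀ i, σ i ∈ Pol (s i) ∧ s (i + 1) ∈ reach Φ (s i) (σ i)) ∧
        ∀ i, ¬ μ (s i)) ↔
    (∃ n ≤ Fintype.card S, ∃ (s : ℕ → S) (σ : ℕ → List Act),
        s 0 ∈ S0 ∧
        (∀ i < n, σ i ∈ Pol (s i) ∧ s (i + 1) ∈ reach Φ (s i) (σ i)) ∧
        (∀ i ≤ n, ¬ μ (s i)) ∧
        ∃ i < n, s n = s i) := by
  constructor
  · rintro ⟨s, σ, h0, hstep, hμ⟩
    obtain ⟨a, b, hne, hab⟩ := Fintype.exists_ne_map_eq_of_card_lt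
      (fun k : Fin (Fintype.card S + 1) => s k) (by simp)
    have hne' : (a : ℕ) ≠ b := fun h => hne (Fin.ext h)
    rcases lt_or_gt_of_ne hne' with hlt | hlt
    · exact ⟨b, by omega, s, σ, h0, fun i _ => hstep i, fun i _ => hμ i, a, hlt, hab.symm⟩
    · exact ⟨a, by omega, s, σ, h0, fun i _ => hstep i, fun i _ => hμ i, b, hlt, hab⟩
  · rintro ⟨n, hn, s, σ, h0, hstep, hμ, i, hin, hsn⟩
    set m := n - i with hm
    have hm0 : 0 < m := by omega
    set f : ℕ → ℕ := fun k => if k < n then k else i + (k - i) % m with hf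
    have hfn : ∀ k, f k < n := by
      intro k; simp only [hf]; split
      · assumption
      · have := Nat.mod_lt (k - i) hm0; omega
    have key : ∀ k, s (f (k + 1)) = s (f k + 1) := by
      intro k
      simp only [hf]
      rcases lt_trichotomy (k + 1) n with h | h | h
      · rw [if_pos h, if_pos (by omega)]
      · rw [if_pos (show k < n by omega), if_neg (by omega)]
        have h1 : (k + 1 - i) % m = 0 := by
          have : k + 1 - i = m := by omega
          simp [this]
        rw [h1, Nat.add_zero, ← hsn]
        congr 1; omega
      · have hk : ¬ k < n := by omega
        rw [if_neg hk, if_neg (by omega)]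
        have hr : (k - i) % m < m := Nat.mod_lt _ hm0
        have h2 : k + 1 - i = (k - i) + 1 := by omega
        rw [h2]
        by_cases hc : (k - i) % m + 1 < m
        · have h1m : 1 % m = 1 := Nat.mod_eq_of_lt (by omega)
          have heq : (k - i + 1) % m = (k - i) % m + 1 := by
            rw [Nat.add_mod, h1m, Nat.mod_eq_of_lt hc]
          rw [heq, ← Nat.add_assoc]
        · have hrm : (k - i) % m + 1 = m := by omega
          have heq : k - i + 1 = m * ((k - i) / m + 1) := by
            have h3 := Nat.div_add_mod (k - i) m
            rw [Nat.mul_succ]; omega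
          rw [heq, Nat.mul_mod_right, Nat.add_zero, ← hsn]
          congr 1; omega
    refine ⟨fun k => s (f k), fun k => σ (f k), ?_, ?_, ?_⟩
    · show s (f 0) ∈ S0
      have : f 0 = 0 := by simp only [hf]; rw [if_pos (by omega)]
      rw [this]; exact h0
    · intro k
      refine ⟨(hstep (f k) (hfn k)).1, ?_⟩
      show s (f (k + 1)) ∈ reach Φ (s (f k)) (σ (f k))
      rw [key k]
      exact (hstep (f k) (hfn k)).2
    · intro k
      exact hμ (f k) (hfn k).le

end Stmt10
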